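/- In the category Graph of directed multigraphs there exist rules ρ₁ = ⟨p₁, ac_(L₁)⟩ and ρ₂ = ⟨p₂, ac_(L₂)⟩ whose plain rules consist of finite graphs and whose ACs are built from finitely many morphisms between finite graphs, such that no finite set S of transformation pairs for ⟨ρ₁, ρ₂⟩ in which all occurring graphs are finite is complete with respect to parallel dependence, i.e. such that every parallel dependent transformation pair via ⟨ρ₁, ρ₂⟩ admits an embedding of some member of S via an extension morphism and extension diagrams. -/

import Mathlib

/-!
Take for `ρ₁` the identity rule on the empty graph whose application condition `AC.rayLike`
demands: no loops, a vertex without incoming edge, an outgoing edge at every vertex, and no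
vertex with two incoming edges. Then the target map is injective but not surjective while the
source map is surjective, which is impossible in a finite graph; the ray `0 ⟶ 1 ⟶ 2 ⟶ ⋯`
satisfies the condition. Take for `ρ₂` the rule deleting an edge. Applied to the ray at its first
edge, the two rules are in conflict, because vertex `0` loses its only outgoing edge. A complete
set would have to contain a transformation pair embedding into this conflict, but every pair via
`ρ₁` has an infinite start graph.
-/

open CategoryTheory CategoryTheory.Limits

universe v u

variable {C : Type u} [Category.{v} C]

/-- A plain rule: a span `L ⟵l I ⟶r R` with `l` and `r` monomorphisms. -/
structure PlainRule (C : Type u) [Category.{v} C] : Type (max u v) where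
  L : C
  I : C
  R : C
  l : I ⟶ L
  r : I ⟶ R
  mono_l : Mono l
  mono_r : Mono r

/-- An AC-disregarding direct transformation `G ⇒_(p,m) H`: a double pushout with
context `D`, match `m` and comatch `cm`. -/
structure Trafo (p : PlainRule C) (G H : C) : Type (max u v) where
  m : p.L ⟶ G
  D : C
  f : p.I ⟶ D
  k : D ⟶ G
  c : D ⟶ H
  cm : p.R ⟶ H
  po1 : IsPushout p.l f m k
  po2 : IsPushout p.r f cm c

/-- A pair of AC-disregarding transformations `H₁ ⇐_(p₁,m₁) G ⇒_(p₂,m₂) H₂`. -/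
structure TrafoPair (p₁ p₂ : PlainRule C) : Type (max u v) where
  H₁ : C
  G : C
  H₂ : C
  t₁ : Trafo p₁ G H₁
  t₂ : Trafo p₂ G H₂

/-- An extension diagram embedding `t'` into `t` via extension morphism `ext`. -/
structure TrafoEmbedding {p : PlainRule C} {G' H' G H : C}
    (t' : Trafo p G' H') (t : Trafo p G H) (ext : G' ⟶ G) : Type (max u v) where
  d : t'.D ⟶ t.D
  h : H' ⟶ H
  match_eq : t'.m ≫ ext = t.m
  f_eq : t'.f ≫ d = t.f
  po1 : IsPushout t'.k d ext t.k
  po2 : IsPushout t'.c d h t.c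

/-- A transformation pair embedded into another via a common extension morphism. -/
structure PairEmbedding {p₁ p₂ : PlainRule C} (tp' tp : TrafoPair p₁ p₂)
    (ext : tp'.G ⟶ tp.G) : Type (max u v) where
  e₁ : TrafoEmbedding tp'.t₁ tp.t₁ ext
  e₂ : TrafoEmbedding tp'.t₂ tp.t₂ ext

/-- Parallel independence of a plain transformation pair. -/
def TrafoPair.ParallelIndep {p₁ p₂ : PlainRule C} (tp : TrafoPair p₁ p₂) : Prop :=
  (∃ d₁₂ : p₁.L ⟶ tp.t₂.D, d₁₂ ≫ tp.t₂.k = tp.t₁.m) ∧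
  (∃ d₂₁ : p₂.L ⟶ tp.t₁.D, d₂₁ ≫ tp.t₁.k = tp.t₂.m)

/-- Use-delete conflict: no commuting morphism `d₁₂ : L₁ ⟶ D₂` exists. -/
def TrafoPair.UseDelete {p₁ p₂ : PlainRule C} (tp : TrafoPair p₁ p₂) : Prop :=
  ¬ ∃ d₁₂ : p₁.L ⟶ tp.t₂.D, d₁₂ ≫ tp.t₂.k = tp.t₁.m

/-- Delete-use conflict: no commuting morphism `d₂₁ : L₂ ⟶ D₁` exists. -/
def TrafoPair.DeleteUse {p₁ p₂ : PlainRule C} (tp : TrafoPair p₁ p₂) : Prop :=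
  ¬ ∃ d₂₁ : p₂.L ⟶ tp.t₁.D, d₂₁ ≫ tp.t₁.k = tp.t₂.m

/-- A transformation pair is in conflict (parallel dependent) if it is not
parallel independent. -/
def TrafoPair.InConflict {p₁ p₂ : PlainRule C} (tp : TrafoPair p₁ p₂) : Prop :=
  ¬ tp.ParallelIndep

/-- `tpI` is an initial transformation pair for `tp`. -/
def IsInitialTrafoPairFor {p₁ p₂ : PlainRule C} (tpI tp : TrafoPair p₁ p₂) : Prop :=
  ∃ fI : tpI.G ⟶ tp.G, Nonempty (PairEmbedding tpI tp fI) ∧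
    ∀ (tp' : TrafoPair p₁ p₂) (f : tp'.G ⟶ tp.G), PairEmbedding tp' tp f →
      ∃! g : tpI.G ⟶ tp'.G, Nonempty (PairEmbedding tpI tp' g) ∧ g ≫ f = fI

/-- Two transformation pairs are isomorphic if each is embedded into the other via
an isomorphism as extension morphism. -/
def PairIso {p₁ p₂ : PlainRule C} (tp tp' : TrafoPair p₁ p₂) : Prop :=
  (∃ e : tp.G ⟶ tp'.G, IsIso e ∧ Nonempty (PairEmbedding tp tp' e)) ∧
  (∃ e' : tp'.G ⟶ tp.G, IsIso e' ∧ Nonempty (PairEmbedding tp' tp e'))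

section Coproducts

variable [HasBinaryCoproducts C]

lemma isPushout_coprod_left {A B X : C} (g : A ⟶ B) :
    IsPushout g (coprod.inl : A ⟶ A ⨿ X) (coprod.inl : B ⟶ B ⨿ X)
      (coprod.map g (𝟙 X)) := by
  have w : CommSq g (coprod.inl : A ⟶ A ⨿ X) (coprod.inl : B ⟶ B ⨿ X)
      (coprod.map g (𝟙 X)) := ⟨by simp⟩
  refine IsPushout.of_isColimit' w ?_
  exact PushoutCocone.IsColimit.mk w.w
    (fun s => coprod.desc s.inl (coprod.inr ≫ s.inr))
    (fun s => coprod.inl_desc _ _)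
    (fun s => by
      apply coprod.hom_ext
      · rw [coprod.inl_map_assoc]; erw [coprod.inl_desc]; exact s.condition
      · rw [coprod.inr_map_assoc, Category.id_comp]; erw [coprod.inr_desc])
    (fun s mm h1 h2 => by
      apply coprod.hom_ext
      · rw [h1]; exact (coprod.inl_desc _ _).symm
      · have := coprod.inr ≫= h2
        rw [coprod.inr_map_assoc, Category.id_comp] at this
        rw [this]; exact (coprod.inr_desc _ _).symm)

lemma isPushout_coprod_right {A B X : C} (g : A ⟶ B) :
    IsPushout g (coprod.inr : A ⟶ X ⨿ A) (coprod.inr : B ⟶ X ⨿ B)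
      (coprod.map (𝟙 X) g) := by
  have w : CommSq g (coprod.inr : A ⟶ X ⨿ A) (coprod.inr : B ⟶ X ⨿ B)
      (coprod.map (𝟙 X) g) := ⟨by simp⟩
  refine IsPushout.of_isColimit' w ?_
  exact PushoutCocone.IsColimit.mk w.w
    (fun s => coprod.desc (coprod.inl ≫ s.inr) s.inl)
    (fun s => coprod.inr_desc _ _)
    (fun s => by
      apply coprod.hom_ext
      · rw [coprod.inl_map_assoc, Category.id_comp]; erw [coprod.inl_desc]
      · rw [coprod.inr_map_assoc]; erw [coprod.inr_desc]; exact s.condition)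
    (fun s mm h1 h2 => by
      apply coprod.hom_ext
      · have := coprod.inl ≫= h2
        rw [coprod.inl_map_assoc, Category.id_comp] at this
        rw [this]; exact (coprod.inl_desc _ _).symm
      · rw [h1]; exact (coprod.inr_desc _ _).symm)

/-- The transformation applying `p` at the coproduct injection `inl : L ⟶ L ⨿ X`. -/
noncomputable def coprodTrafoL (p : PlainRule C) (X : C) : Trafo p (p.L ⨿ X) (p.R ⨿ X) where
  m := coprod.inl
  D := p.I ⨿ X
  f := coprod.inl
  k := coprod.map p.l (𝟙 X)
  c := coprod.map p.r (𝟙 X)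
  cm := coprod.inl
  po1 := isPushout_coprod_left p.l
  po2 := isPushout_coprod_left p.r

/-- The transformation applying `p` at the coproduct injection `inr : L ⟶ X ⨿ L`. -/
noncomputable def coprodTrafoR (p : PlainRule C) (X : C) : Trafo p (X ⨿ p.L) (X ⨿ p.R) where
  m := coprod.inr
  D := X ⨿ p.I
  f := coprod.inr
  k := coprod.map (𝟙 X) p.l
  c := coprod.map (𝟙 X) p.r
  cm := coprod.inr
  po1 := isPushout_coprod_right p.l
  po2 := isPushout_coprod_right p.r

/-- The transformation pair `tp_(L₁+L₂) : R₁+L₂ ⇐_(p₁,i₁) L₁+L₂ ⇒_(p₂,i₂) L₁+R₂`. -/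
noncomputable def coprodPair (p₁ p₂ : PlainRule C) : TrafoPair p₁ p₂ where
  H₁ := p₁.R ⨿ p₂.L
  G := p₁.L ⨿ p₂.L
  H₂ := p₁.L ⨿ p₂.R
  t₁ := coprodTrafoL p₁ p₂.L
  t₂ := coprodTrafoR p₂ p₁.L

end Coproducts

/-! ## The category `MGraph` of directed multigraphs -/

/-- A directed multigraph: vertices, edges, and source/target maps. -/
structure MGraph : Type 1 where
  V : Type
  E : Type
  s : E → V
  t : E → V

/-- A morphism of directed multigraphs. -/
@[ext]
structure MGraphHom (G H : MGraph) where
  onV : G.V → H.V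
  onE : G.E → H.E
  comm_s : ∀ e, H.s (onE e) = onV (G.s e)
  comm_t : ∀ e, H.t (onE e) = onV (G.t e)

instance : Category MGraph where
  Hom := MGraphHom
  id G := ⟨fun v => v, fun e => e, fun _ => rfl, fun _ => rfl⟩
  comp f g := ⟨fun v => g.onV (f.onV v), fun e => g.onE (f.onE e),
    fun e => by rw [g.comm_s, f.comm_s], fun e => by rw [g.comm_t, f.comm_t]⟩

lemma MGraph.hom_ext' {G H : MGraph} {f g : G ⟶ H}
    (h1 : MGraphHom.onV f = MGraphHom.onV g) (h2 : MGraphHom.onE f = MGraphHom.onE g) :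
    f = g := MGraphHom.ext h1 h2

/-- A multigraph is finite if its vertex and edge types are finite. -/
def MGraph.Fin (G : MGraph) : Prop := Finite G.V ∧ Finite G.E

/-- The class `M` of injective multigraph morphisms. -/
def InjHom {G H : MGraph} (f : G ⟶ H) : Prop :=
  Function.Injective (MGraphHom.onV f) ∧ Function.Injective (MGraphHom.onE f)

/-- A pair of morphisms with common codomain is jointly surjective. -/
def JointlySurj {A B K : MGraph} (f : A ⟶ K) (g : B ⟶ K) : Prop :=
  (∀ v : K.V, (∃ a, MGraphHom.onV f a = v) ∨ (∃ b, MGraphHom.onV g b = v)) ∧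
  (∀ e : K.E, (∃ a, MGraphHom.onE f a = e) ∨ (∃ b, MGraphHom.onE g b = e))

/-! ### Binary coproducts of multigraphs -/

/-- Disjoint union of multigraphs. -/
def MGraph.sum (G H : MGraph) : MGraph where
  V := G.V ⊕ H.V
  E := G.E ⊕ H.E
  s := Sum.elim (fun e => Sum.inl (G.s e)) (fun e => Sum.inr (H.s e))
  t := Sum.elim (fun e => Sum.inl (G.t e)) (fun e => Sum.inr (H.t e))

def MGraph.inl' (G H : MGraph) : G ⟶ G.sum H :=
  ⟨Sum.inl, Sum.inl, fun _ => rfl, fun _ => rfl⟩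

def MGraph.inr' (G H : MGraph) : H ⟶ G.sum H :=
  ⟨Sum.inr, Sum.inr, fun _ => rfl, fun _ => rfl⟩

def MGraph.desc' {G H K : MGraph} (f : G ⟶ K) (g : H ⟶ K) : G.sum H ⟶ K where
  onV := Sum.elim (MGraphHom.onV f) (MGraphHom.onV g)
  onE := Sum.elim (MGraphHom.onE f) (MGraphHom.onE g)
  comm_s := by rintro (e | e) <;> simp [MGraph.sum, MGraphHom.comm_s]
  comm_t := by rintro (e | e) <;> simp [MGraph.sum, MGraphHom.comm_t]

lemma MGraph.inl'_desc' {G H K : MGraph} (f : G ⟶ K) (g : H ⟶ K) :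
    MGraph.inl' G H ≫ MGraph.desc' f g = f := by
  apply MGraph.hom_ext' <;> rfl

lemma MGraph.inr'_desc' {G H K : MGraph} (f : G ⟶ K) (g : H ⟶ K) :
    MGraph.inr' G H ≫ MGraph.desc' f g = g := by
  apply MGraph.hom_ext' <;> rfl

lemma MGraph.sum_hom_ext {G H K : MGraph} {f g : G.sum H ⟶ K}
    (h1 : MGraph.inl' G H ≫ f = MGraph.inl' G H ≫ g)
    (h2 : MGraph.inr' G H ≫ f = MGraph.inr' G H ≫ g) : f = g := by
  apply MGraph.hom_ext'
  · funext v
    rcases v with v | v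
    · exact congrFun (congrArg MGraphHom.onV h1) v
    · exact congrFun (congrArg MGraphHom.onV h2) v
  · funext e
    rcases e with e | e
    · exact congrFun (congrArg MGraphHom.onE h1) e
    · exact congrFun (congrArg MGraphHom.onE h2) e

def MGraph.sumCofanIsColimit (G H : MGraph) :
    IsColimit (BinaryCofan.mk (MGraph.inl' G H) (MGraph.inr' G H)) :=
  BinaryCofan.isColimitMk
    (fun s => MGraph.desc' s.inl s.inr)
    (fun s => MGraph.inl'_desc' _ _)
    (fun s => MGraph.inr'_desc' _ _)
    (fun s mm h1 h2 => by
      apply MGraph.sum_hom_ext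
      · rw [h1]; exact (MGraph.inl'_desc' _ _).symm
      · rw [h2]; exact (MGraph.inr'_desc' _ _).symm)

instance (G H : MGraph) : HasColimit (pair G H) :=
  HasColimit.mk ⟨_, MGraph.sumCofanIsColimit G H⟩

instance : HasBinaryCoproducts MGraph := hasBinaryCoproducts_of_hasColimit_pair MGraph

/-! ### Nested application conditions -/

/-- Nested application conditions over a multigraph. -/
inductive AC : MGraph → Type 1 where
  | tru : (P : MGraph) → AC P
  | ex : {P Q : MGraph} → (P ⟶ Q) → AC Q → AC P
  | neg : {P : MGraph} → AC P → AC P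
  | conj : {P : MGraph} → AC P → AC P → AC P

/-- Satisfaction of an application condition by a morphism, where the extension
morphism `q` is required to be in the class `M` of injective morphisms. -/
def AC.Sat : {P G : MGraph} → (P ⟶ G) → AC P → Prop
  | _, _, _, AC.tru _ => True
  | _, G, p, AC.ex a c => ∃ q : _ ⟶ G, InjHom q ∧ a ≫ q = p ∧ AC.Sat q c
  | _, _, p, AC.neg c => ¬ AC.Sat p c
  | _, _, p, AC.conj c₁ c₂ => AC.Sat p c₁ ∧ AC.Sat p c₂

/-- All constituent graphs of an application condition are finite. -/
def AC.FinGraphs : {P : MGraph} → AC P → Prop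
  | _, AC.tru _ => True
  | _, AC.ex (Q := Q) _ c => Q.Fin ∧ AC.FinGraphs c
  | _, AC.neg c => AC.FinGraphs c
  | _, AC.conj c₁ c₂ => AC.FinGraphs c₁ ∧ AC.FinGraphs c₂

/-- Equivalence of ACs: exactly the same morphisms satisfy them. -/
def AC.Equiv {P : MGraph} (c c' : AC P) : Prop :=
  ∀ {G : MGraph} (p : P ⟶ G), AC.Sat p c ↔ AC.Sat p c'

/-- A rule with application condition. -/
structure Rule : Type 1 where
  p : PlainRule MGraph
  ac : AC p.L

/-- A rule is finite if its rule graphs and the constituent graphs of its AC are. -/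
def RuleFin (ρ : Rule) : Prop :=
  ρ.p.L.Fin ∧ ρ.p.I.Fin ∧ ρ.p.R.Fin ∧ AC.FinGraphs ρ.ac

/-- A transformation pair via rules with ACs: the matches satisfy the rule ACs. -/
structure RTrafoPair (ρ₁ ρ₂ : Rule) : Type 1 where
  tp : TrafoPair ρ₁.p ρ₂.p
  sat₁ : AC.Sat tp.t₁.m ρ₁.ac
  sat₂ : AC.Sat tp.t₂.m ρ₂.ac

/-- Parallel independence for transformations via rules with ACs. -/
def RParallelIndep (ρ₁ ρ₂ : Rule) (tp : TrafoPair ρ₁.p ρ₂.p) : Prop :=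
  (∃ d₁₂ : ρ₁.p.L ⟶ tp.t₂.D, d₁₂ ≫ tp.t₂.k = tp.t₁.m ∧
      AC.Sat (d₁₂ ≫ tp.t₂.c) ρ₁.ac) ∧
  (∃ d₂₁ : ρ₂.p.L ⟶ tp.t₁.D, d₂₁ ≫ tp.t₁.k = tp.t₂.m ∧
      AC.Sat (d₂₁ ≫ tp.t₁.c) ρ₂.ac)

/-- All graphs occurring in a transformation pair are finite. -/
def RTrafoPairFin {ρ₁ ρ₂ : Rule} (t : RTrafoPair ρ₁ ρ₂) : Prop :=
  t.tp.H₁.Fin ∧ t.tp.G.Fin ∧ t.tp.H₂.Fin ∧ t.tp.t₁.D.Fin ∧ t.tp.t₂.D.Fin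

lemma InjHom.injective_t {Q G : MGraph} {q : Q ⟶ G} (hq : InjHom q)
    (hG : Function.Injective G.t) : Function.Injective Q.t := by
  intro e₁ e₂ h
  apply hq.2
  apply hG
  rw [q.comm_t, q.comm_t, h]

namespace MGraph

abbrev empty : MGraph := ⟨Empty, Empty, Empty.elim, Empty.elim⟩

abbrev vertex : MGraph := ⟨Unit, Empty, Empty.elim, Empty.elim⟩

abbrev twoVertices : MGraph := ⟨Bool, Empty, Empty.elim, Empty.elim⟩

abbrev edge : MGraph := ⟨Bool, Unit, fun _ => false, fun _ => true⟩

abbrev loop : MGraph := ⟨Unit, Unit, fun _ => (), fun _ => ()⟩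

/-- Two edges `1 ⟶ 0 ⟵ 2`. -/
abbrev cherry : MGraph := ⟨_root_.Fin 3, Bool, fun b => if b then 2 else 1, fun _ => 0⟩

abbrev parallelEdges : MGraph := ⟨Bool, Bool, fun _ => false, fun _ => true⟩

abbrev ray : MGraph := ⟨ℕ, ℕ, id, Nat.succ⟩

def deleteEdge (G : MGraph) (e : G.E) : MGraph :=
  ⟨G.V, {f // f ≠ e}, fun f => G.s f, fun f => G.t f⟩

def Loopless (G : MGraph) : Prop := ∀ e, G.s e ≠ G.t e

structure RayLike (G : MGraph) : Prop where
  loopless : G.Loopless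
  not_surjective_t : ¬ Function.Surjective G.t
  surjective_s : Function.Surjective G.s
  injective_t : Function.Injective G.t

lemma RayLike.not_fin {G : MGraph} (hG : G.RayLike) : ¬ G.Fin := by
  rintro ⟨hV, hE⟩
  have hcard := Nat.card_le_card_of_surjective _ hG.surjective_s
  exact hG.not_surjective_t (hG.injective_t.bijective_of_nat_card_le hcard).2

lemma rayLike_ray : ray.RayLike where
  loopless n := (Nat.succ_ne_self n).symm
  not_surjective_t h := by
    obtain ⟨n, hn⟩ := h 0
    exact Nat.succ_ne_zero n hn
  surjective_s n := ⟨n, rfl⟩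
  injective_t := Nat.succ_injective

lemma not_rayLike_deleteEdge_ray : ¬ (ray.deleteEdge 0).RayLike := fun h => by
  obtain ⟨⟨n, hn⟩, hn0⟩ := h.surjective_s (0 : ℕ)
  exact hn hn0

variable {G H Q : MGraph}

lemma fin_of_finite [Finite G.V] [Finite G.E] : G.Fin := ⟨‹_›, ‹_›⟩

def fromEmpty (G : MGraph) : empty ⟶ G :=
  ⟨Empty.elim, Empty.elim, fun e => e.elim, fun e => e.elim⟩

instance : Subsingleton (empty ⟶ G) :=
  ⟨fun _ _ => hom_ext' (funext (·.elim)) (funext (·.elim))⟩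

def vertexAt (v : G.V) : vertex ⟶ G :=
  ⟨fun _ => v, Empty.elim, fun e => e.elim, fun e => e.elim⟩

def edgeAt (e : G.E) : edge ⟶ G :=
  ⟨fun b => if b then G.t e else G.s e, fun _ => e, fun _ => rfl, fun _ => rfl⟩

lemma eq_vertexAt (q : vertex ⟶ G) : q = vertexAt (q.onV ()) :=
  hom_ext' rfl (funext (·.elim))

lemma vertexAt_comp (v : Q.V) (q : Q ⟶ G) : vertexAt v ≫ q = vertexAt (q.onV v) :=
  hom_ext' rfl (funext (·.elim))

lemma injHom_of_subsingleton [Subsingleton Q.V] [Subsingleton Q.E] (q : Q ⟶ G) : InjHom q :=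
  ⟨Function.injective_of_subsingleton _, Function.injective_of_subsingleton _⟩

lemma mono_of_injHom {f : G ⟶ H} (hf : InjHom f) : Mono f :=
  ⟨fun _ _ h => hom_ext' (funext fun x => hf.1 (congrArg (fun w => MGraphHom.onV w x) h))
    (funext fun x => hf.2 (congrArg (fun w => MGraphHom.onE w x) h))⟩

lemma injHom_edgeAt_iff {e : G.E} : InjHom (edgeAt e) ↔ G.s e ≠ G.t e :=
  ⟨fun h => Bool.injective_iff.1 h.1,
    fun h => ⟨Bool.injective_iff.2 h, Function.injective_of_subsingleton _⟩⟩

lemma injective_t_of_not_injHom (hG : G.Loopless) (hc : ∀ q : cherry ⟶ G, ¬ InjHom q)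
    (hp : ∀ q : parallelEdges ⟶ G, ¬ InjHom q) : Function.Injective G.t := by
  intro f g hfg
  by_contra hne
  by_cases hs : G.s f = G.s g
  · refine hp ⟨fun b => if b then G.t f else G.s f, fun b => if b then g else f, ?_, ?_⟩
      ⟨Bool.injective_iff.2 (hG f), Bool.injective_iff.2 hne⟩
    · rintro (_ | _) <;> simp [hs]
    · rintro (_ | _) <;> simp [hfg]
  · refine hc ⟨![G.t f, G.s f, G.s g], fun b => if b then g else f, ?_, ?_⟩
      ⟨?_, Bool.injective_iff.2 hne⟩
    · rintro (_ | _) <;> simp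
    · rintro (_ | _) <;> simp [hfg]
    · have h₁ := hG f
      have h₂ := hfg ▸ hG g
      intro a b hab
      fin_cases a <;> fin_cases b <;> simp_all [eq_comm]

variable {X : MGraph}

def verticesAt (G : MGraph) (v w : G.V) : twoVertices ⟶ G :=
  ⟨fun b => if b then w else v, Empty.elim, fun e => e.elim, fun e => e.elim⟩

def deleteEdgeι (G : MGraph) (e : G.E) : G.deleteEdge e ⟶ G :=
  ⟨id, Subtype.val, fun _ => rfl, fun _ => rfl⟩

open scoped Classical in
noncomputable def deleteEdgeDesc {e : G.E} (a : edge ⟶ X) (b : G.deleteEdge e ⟶ X)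
    (hab : verticesAt edge false true ≫ a = verticesAt (G.deleteEdge e) (G.s e) (G.t e) ≫ b) :
    G ⟶ X where
  onV := b.onV
  onE f := if h : f = e then a.onE () else b.onE ⟨f, h⟩
  comm_s f := by
    by_cases h : f = e
    · subst h
      rw [dif_pos rfl, a.comm_s]
      exact congrArg (fun r => MGraphHom.onV r false) hab
    · rw [dif_neg h]
      exact b.comm_s _
  comm_t f := by
    by_cases h : f = e
    · subst h
      rw [dif_pos rfl, a.comm_t]
      exact congrArg (fun r => MGraphHom.onV r true) hab
    · rw [dif_neg h]
      exact b.comm_t _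

lemma isPushout_deleteEdge (G : MGraph) (e : G.E) :
    IsPushout (verticesAt edge false true) (verticesAt (G.deleteEdge e) (G.s e) (G.t e))
      (edgeAt e) (G.deleteEdgeι e) := by
  have w : CommSq (verticesAt edge false true) (verticesAt (G.deleteEdge e) (G.s e) (G.t e))
      (edgeAt e) (G.deleteEdgeι e) :=
    ⟨hom_ext' (funext fun b => by cases b <;> rfl) (funext (·.elim))⟩
  refine IsPushout.of_isColimit' w (PushoutCocone.IsColimit.mk w.w
    (fun s => deleteEdgeDesc s.inl s.inr s.condition) (fun s => ?_)
    (fun s => hom_ext' rfl (funext fun f => dif_neg f.2))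
    (fun s m hl hr => ?_))
  · refine hom_ext' (funext fun b => ?_) (funext fun _ => dif_pos rfl)
    cases b
    · exact (congrArg (fun r => MGraphHom.onV r false) s.condition).symm
    · exact (congrArg (fun r => MGraphHom.onV r true) s.condition).symm
  · refine hom_ext' (funext fun v => ?_) (funext fun f => ?_)
    · exact congrArg (fun r : G.deleteEdge e ⟶ s.pt => r.onV v) hr
    dsimp only [deleteEdgeDesc]
    by_cases h : f = e
    · subst h
      rw [dif_pos rfl]
      exact congrArg (fun r : edge ⟶ s.pt => r.onE ()) hl
    · rw [dif_neg h]
      exact congrArg (fun r : G.deleteEdge e ⟶ s.pt => r.onE ⟨f, h⟩) hr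

end MGraph

open MGraph

namespace AC

def noLoops : AC empty := .neg (.ex (fromEmpty loop) (.tru loop))

def hasSource : AC empty :=
  .ex (fromEmpty vertex) (.neg (.ex (vertexAt true : vertex ⟶ edge) (.tru edge)))

def allHaveOutEdge : AC empty :=
  .neg (.ex (fromEmpty vertex) (.neg (.ex (vertexAt false : vertex ⟶ edge) (.tru edge))))

def targetInjective : AC empty :=
  .conj (.neg (.ex (fromEmpty cherry) (.tru cherry)))
    (.neg (.ex (fromEmpty parallelEdges) (.tru parallelEdges)))

def rayLike : AC empty := .conj noLoops (.conj hasSource (.conj allHaveOutEdge targetInjective))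

variable {G : MGraph} {p : empty ⟶ G}

lemma sat_ex_fromEmpty_iff {Q : MGraph} {c : AC Q} :
    Sat p (.ex (fromEmpty Q) c) ↔ ∃ q : Q ⟶ G, InjHom q ∧ Sat q c := by
  simp only [Sat, eq_iff_true_of_subsingleton, true_and]

lemma sat_ex_vertex_iff {c : AC vertex} :
    Sat p (.ex (fromEmpty vertex) c) ↔ ∃ v : G.V, Sat (vertexAt v) c := by
  rw [sat_ex_fromEmpty_iff]
  refine ⟨fun ⟨q, _, hq⟩ => ⟨q.onV (), by rwa [← eq_vertexAt]⟩, fun ⟨v, hv⟩ => ?_⟩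
  exact ⟨_, injHom_of_subsingleton _, hv⟩

lemma sat_edge_to_iff (hG : G.Loopless) (v : G.V) :
    Sat (vertexAt v) (.ex (vertexAt true : vertex ⟶ edge) (.tru edge)) ↔ ∃ e, G.t e = v := by
  simp only [Sat, and_true]
  constructor
  · rintro ⟨q, -, hq⟩
    rw [vertexAt_comp] at hq
    exact ⟨q.onE (), (q.comm_t ()).trans (congrArg (fun r : vertex ⟶ G => r.onV ()) hq)⟩
  · rintro ⟨e, rfl⟩
    exact ⟨edgeAt e, injHom_edgeAt_iff.2 (hG e), vertexAt_comp _ _⟩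

lemma sat_edge_from_iff (hG : G.Loopless) (v : G.V) :
    Sat (vertexAt v) (.ex (vertexAt false : vertex ⟶ edge) (.tru edge)) ↔ ∃ e, G.s e = v := by
  simp only [Sat, and_true]
  constructor
  · rintro ⟨q, -, hq⟩
    rw [vertexAt_comp] at hq
    exact ⟨q.onE (), (q.comm_s ()).trans (congrArg (fun r : vertex ⟶ G => r.onV ()) hq)⟩
  · rintro ⟨e, rfl⟩
    exact ⟨edgeAt e, injHom_edgeAt_iff.2 (hG e), vertexAt_comp _ _⟩

lemma sat_noLoops_iff : Sat p noLoops ↔ G.Loopless := by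
  simp only [noLoops, Sat, eq_iff_true_of_subsingleton, and_true, not_exists]
  refine ⟨fun h e he => h ⟨fun _ => G.s e, fun _ => e, fun _ => rfl, fun _ => he.symm⟩
    (injHom_of_subsingleton _), fun hG q _ => hG (q.onE ()) ?_⟩
  exact (q.comm_s ()).trans (q.comm_t ()).symm

lemma sat_hasSource_iff (hG : G.Loopless) : Sat p hasSource ↔ ¬ Function.Surjective G.t := by
  simp only [hasSource, sat_ex_vertex_iff, Sat.eq_3, sat_edge_to_iff hG, Function.Surjective,
    not_forall]

lemma sat_allHaveOutEdge_iff (hG : G.Loopless) :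
    Sat p allHaveOutEdge ↔ Function.Surjective G.s := by
  simp only [allHaveOutEdge, Sat.eq_3, sat_ex_vertex_iff, sat_edge_from_iff hG,
    Function.Surjective, not_exists_not]

lemma sat_targetInjective_iff (hG : G.Loopless) :
    Sat p targetInjective ↔ Function.Injective G.t := by
  simp only [targetInjective, Sat, eq_iff_true_of_subsingleton, and_true, not_exists]
  exact ⟨fun h => injective_t_of_not_injHom hG h.1 h.2, fun ht =>
    ⟨fun _ hq => Bool.false_ne_true (hq.injective_t ht rfl),
      fun _ hq => Bool.false_ne_true (hq.injective_t ht rfl)⟩⟩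

lemma sat_rayLike_iff : Sat p rayLike ↔ G.RayLike := by
  refine ⟨fun ⟨hl, hs, ho, ht⟩ => ?_, fun hG => ?_⟩
  · have hG := sat_noLoops_iff.1 hl
    exact ⟨hG, (sat_hasSource_iff hG).1 hs, (sat_allHaveOutEdge_iff hG).1 ho,
      (sat_targetInjective_iff hG).1 ht⟩
  · exact ⟨sat_noLoops_iff.2 hG.loopless, (sat_hasSource_iff hG.loopless).2 hG.not_surjective_t,
      (sat_allHaveOutEdge_iff hG.loopless).2 hG.surjective_s,
      (sat_targetInjective_iff hG.loopless).2 hG.injective_t⟩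

end AC

def PlainRule.id (X : C) : PlainRule C := ⟨X, X, X, 𝟙 X, 𝟙 X, inferInstance, inferInstance⟩

def PlainRule.idTrafo {X G : C} (m : X ⟶ G) : Trafo (PlainRule.id X) G G where
  m := m
  D := G
  f := m
  k := 𝟙 G
  c := 𝟙 G
  cm := m
  po1 := IsPushout.id_horiz m
  po2 := IsPushout.id_horiz m

def edgeDeletion : PlainRule MGraph :=
  ⟨edge, twoVertices, twoVertices, verticesAt edge false true, 𝟙 twoVertices,
    mono_of_injHom ⟨Bool.injective_iff.2 Bool.false_ne_true, Function.injective_of_subsingleton _⟩,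
    inferInstance⟩

def edgeDeletionTrafo (G : MGraph) (e : G.E) : Trafo edgeDeletion G (G.deleteEdge e) where
  m := edgeAt e
  D := G.deleteEdge e
  f := verticesAt (G.deleteEdge e) (G.s e) (G.t e)
  k := G.deleteEdgeι e
  c := 𝟙 _
  cm := verticesAt (G.deleteEdge e) (G.s e) (G.t e)
  po1 := isPushout_deleteEdge G e
  po2 := IsPushout.id_horiz _

def rayRule : Rule := ⟨PlainRule.id empty, AC.rayLike⟩

def edgeDeletionRule : Rule := ⟨edgeDeletion, .tru edge⟩

lemma ruleFin_rayRule : RuleFin rayRule := by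
  simp [RuleFin, rayRule, PlainRule.id, AC.rayLike, AC.noLoops, AC.hasSource, AC.allHaveOutEdge,
    AC.targetInjective, AC.FinGraphs, fin_of_finite]

lemma ruleFin_edgeDeletionRule : RuleFin edgeDeletionRule := by
  simp [RuleFin, edgeDeletionRule, edgeDeletion, AC.FinGraphs, fin_of_finite]

def rayConflict : RTrafoPair rayRule edgeDeletionRule where
  tp := ⟨ray, ray, ray.deleteEdge 0, PlainRule.idTrafo (fromEmpty ray), edgeDeletionTrafo ray 0⟩
  sat₁ := AC.sat_rayLike_iff.2 rayLike_ray
  sat₂ := trivial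

lemma not_parallelIndep_rayConflict :
    ¬ RParallelIndep rayRule edgeDeletionRule rayConflict.tp :=
  fun ⟨⟨_, _, hsat⟩, _⟩ => not_rayLike_deleteEdge_ray (AC.sat_rayLike_iff.1 hsat)

lemma not_exists_complete_set_of_finite_pairs {ρ₁ ρ₂ : Rule}
    (hρ₁ : ∀ {G : MGraph} (p : ρ₁.p.L ⟶ G), AC.Sat p ρ₁.ac → ¬ G.Fin)
    (t : RTrafoPair ρ₁ ρ₂) (ht : ¬ RParallelIndep ρ₁ ρ₂ t.tp) :
    ¬ ∃ S : Set (RTrafoPair ρ₁ ρ₂), (∀ t ∈ S, RTrafoPairFin t) ∧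
      ∀ t : RTrafoPair ρ₁ ρ₂, ¬ RParallelIndep ρ₁ ρ₂ t.tp →
        ∃ tS ∈ S, ∃ m : tS.tp.G ⟶ t.tp.G, Nonempty (PairEmbedding tS.tp t.tp m) := by
  rintro ⟨S, hS, hcomplete⟩
  obtain ⟨tS, htS, -⟩ := hcomplete t ht
  exact hρ₁ _ tS.sat₁ (hS tS htS).2.1

/-- In the category of directed multigraphs there exist finite rules with ACs such that
no finite set of transformation pairs consisting of finite graphs is complete with
respect to parallel dependence. -/
theorem exists_rules_without_finite_complete_set_of_conflicts :
    ∃ ρ₁ ρ₂ : Rule, RuleFin ρ₁ ∧ RuleFin ρ₂ ∧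
      ¬ ∃ S : Set (RTrafoPair ρ₁ ρ₂), S.Finite ∧ (∀ t ∈ S, RTrafoPairFin t) ∧
          ∀ tpG : RTrafoPair ρ₁ ρ₂, ¬ RParallelIndep ρ₁ ρ₂ tpG.tp →
            ∃ tS ∈ S, ∃ m : tS.tp.G ⟶ tpG.tp.G,
              Nonempty (PairEmbedding tS.tp tpG.tp m) := by
  refine ⟨rayRule, edgeDeletionRule, ruleFin_rayRule, ruleFin_edgeDeletionRule, ?_⟩
  rintro ⟨S, -, hS⟩
  exact not_exists_complete_set_of_finite_pairs (fun p hp => (AC.sat_rayLike_iff.1 hp).not_fin)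
    rayConflict not_parallelIndep_rayConflict ⟨S, hS⟩
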